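/- arXiv:1604.06614 — 2 statements merged into one kernel-verified Lean document; each statement's English description precedes it below -/
import Mathlib

section
/- The median rule med is agenda separable: for every constrained agenda (A,Γ), every independent partition {A1,A2} of A, and every profile P over A, med(P) = { J1 ∪ J2 : J1 ∈ med(P↓A1), J2 ∈ med(P↓A2) }. -/
/-!
Judgment aggregation framework.
Valuations form a nonempty finite type `V`; a formula is identified with its set of
models, i.e. a `Finset V`; negation is complement.
-/

namespace JA

variable {V : Type*} [Fintype V] [DecidableEq V]

/-- A set of formulas `J` is `Γ`-consistent if some model of `Γ` satisfies every formula of `J`. -/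
def Consistent (Γ : Finset V) (J : Finset (Finset V)) : Prop :=
  ∃ v ∈ Γ, ∀ φ ∈ J, v ∈ φ

/-- `A` is an agenda: it is closed under negation (complement) and contains no formula
with an empty or full set of models. -/
def IsAgenda (A : Finset (Finset V)) : Prop :=
  (∀ φ ∈ A, φᶜ ∈ A) ∧ ∀ φ ∈ A, φ.Nonempty ∧ φ ≠ Finset.univ

/-- The set `𝒥_A` of complete `Γ`-consistent judgment sets over the agenda `A`. -/
def CCJ (Γ : Finset V) (A : Finset (Finset V)) : Set (Finset (Finset V)) :=
  {J | J ⊆ A ∧ (∀ φ ∈ A, φ ∈ J ∨ φᶜ ∈ J) ∧ Consistent Γ J}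

/-- A profile is an `n`-tuple of complete `Γ`-consistent judgment sets. -/
def IsProfile (Γ : Finset V) (A : Finset (Finset V)) {n : ℕ}
    (P : Fin n → Finset (Finset V)) : Prop :=
  ∀ i, P i ∈ CCJ Γ A

/-- Restriction `P↓B` of a profile `P` to a sub-agenda `B`. -/
def restrict {n : ℕ} (P : Fin n → Finset (Finset V)) (B : Finset (Finset V)) :
    Fin n → Finset (Finset V) :=
  fun i => P i ∩ B

/-- `{A1, A2}` is an independent partition of `A`. -/
def IndepPartition (Γ : Finset V) (A A1 A2 : Finset (Finset V)) : Prop :=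
  A1 ∪ A2 = A ∧ Disjoint A1 A2 ∧ IsAgenda A1 ∧ IsAgenda A2 ∧
    ∀ J1 ∈ CCJ Γ A1, ∀ J2 ∈ CCJ Γ A2, Consistent Γ (J1 ∪ J2)

/-- `{A1, A2}` is an independent overlapping decomposition (IOD) of `A`. -/
def IOD (Γ : Finset V) (A A1 A2 : Finset (Finset V)) : Prop :=
  A1 ∪ A2 = A ∧ IsAgenda A1 ∧ IsAgenda A2 ∧
    ∀ J1 ∈ CCJ Γ A1, ∀ J2 ∈ CCJ Γ A2, J1 ∩ A2 = J2 ∩ A1 → J1 ∪ J2 ∈ CCJ Γ A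

/-- The set `{ J1 ∪ J2 : J1 ∈ S1, J2 ∈ S2 }`. -/
def pairUnions (S1 S2 : Set (Finset (Finset V))) : Set (Finset (Finset V)) :=
  {J | ∃ J1 ∈ S1, ∃ J2 ∈ S2, J = J1 ∪ J2}

/-- `N(P,φ)`: the number of agents of the profile `P` accepting `φ`. -/
def Ncount {n : ℕ} (P : Fin n → Finset (Finset V)) (φ : Finset V) : ℕ :=
  (Finset.univ.filter fun i => φ ∈ P i).card

/-- The majoritarian set `m(P) = {φ ∈ A : N(P,φ) > n/2}`. -/
def maj {n : ℕ} (A : Finset (Finset V)) (P : Fin n → Finset (Finset V)) :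
    Finset (Finset V) :=
  A.filter fun φ => n < 2 * Ncount P φ

end JA

namespace JA

variable {V : Type*} [Fintype V] [DecidableEq V]

/-- The median score of a judgment set `J`: `Σ_{φ ∈ J} N(P,φ)`. -/
def medScore {n : ℕ} (P : Fin n → Finset (Finset V)) (J : Finset (Finset V)) : ℕ :=
  ∑ φ ∈ J, Ncount P φ

/-- The median rule: it selects the complete `Γ`-consistent judgment sets maximizing
`Σ_{φ ∈ J} N(P,φ)`. -/
def med (Γ : Finset V) (A : Finset (Finset V)) {n : ℕ} (P : Fin n → Finset (Finset V)) :
    Set (Finset (Finset V)) :=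
  {J | J ∈ CCJ Γ A ∧ ∀ J' ∈ CCJ Γ A, medScore P J' ≤ medScore P J}

lemma restrict_medScore {n : ℕ} (P : Fin n → Finset (Finset V)) (B J : Finset (Finset V))
    (hJ : J ⊆ B) : medScore (restrict P B) J = medScore P J := by
  unfold medScore Ncount restrict
  refine Finset.sum_congr rfl fun φ hφ => ?_
  congr 1
  refine Finset.filter_congr fun i _ => ?_
  simp [Finset.mem_inter, hJ hφ]

lemma inter_mem_CCJ {Γ : Finset V} {A B J : Finset (Finset V)}
    (hB : IsAgenda B) (hBA : B ⊆ A) (hJ : J ∈ CCJ Γ A) : J ∩ B ∈ CCJ Γ B := by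
  obtain ⟨hsub, hcomp, v, hv, hvJ⟩ := hJ
  refine ⟨Finset.inter_subset_right, ?_, v, hv, ?_⟩
  · intro φ hφ
    rcases hcomp φ (hBA hφ) with h | h
    · exact Or.inl (Finset.mem_inter.mpr ⟨h, hφ⟩)
    · exact Or.inr (Finset.mem_inter.mpr ⟨h, hB.1 φ hφ⟩)
  · intro φ hφ; exact hvJ φ (Finset.mem_inter.mp hφ).1

lemma union_mem_CCJ {Γ : Finset V} {A A1 A2 : Finset (Finset V)}
    (hp : IndepPartition Γ A A1 A2) {J1 J2 : Finset (Finset V)}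
    (h1 : J1 ∈ CCJ Γ A1) (h2 : J2 ∈ CCJ Γ A2) : J1 ∪ J2 ∈ CCJ Γ A := by
  obtain ⟨hU, _, _, _, hcons⟩ := hp
  refine ⟨?_, ?_, hcons J1 h1 J2 h2⟩
  · rw [← hU]; exact Finset.union_subset_union h1.1 h2.1
  · intro φ hφ
    rw [← hU] at hφ
    rcases Finset.mem_union.mp hφ with h | h
    · rcases h1.2.1 φ h with h' | h'
      · exact Or.inl (Finset.mem_union_left _ h')
      · exact Or.inr (Finset.mem_union_left _ h')
    · rcases h2.2.1 φ h with h' | h'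
      · exact Or.inl (Finset.mem_union_right _ h')
      · exact Or.inr (Finset.mem_union_right _ h')

lemma decomp_eq {A A1 A2 J : Finset (Finset V)} (hU : A1 ∪ A2 = A) (hJ : J ⊆ A) :
    J = (J ∩ A1) ∪ (J ∩ A2) := by
  rw [← Finset.inter_union_distrib_left, hU, Finset.inter_eq_left.mpr hJ]

lemma score_add {n : ℕ} {P : Fin n → Finset (Finset V)} {A1 A2 J1 J2 : Finset (Finset V)}
    (hd : Disjoint A1 A2) (h1 : J1 ⊆ A1) (h2 : J2 ⊆ A2) :
    medScore P (J1 ∪ J2) = medScore P J1 + medScore P J2 :=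
  Finset.sum_union (hd.mono h1 h2)

/-- The median rule is agenda separable. -/
theorem med_agenda_separable [Nonempty V] :
    ∀ (Γ : Finset V) (A A1 A2 : Finset (Finset V)) (n : ℕ) (P : Fin n → Finset (Finset V)),
      Γ.Nonempty → IsAgenda A → IndepPartition Γ A A1 A2 → IsProfile Γ A P →
      med Γ A P = pairUnions (med Γ A1 (restrict P A1)) (med Γ A2 (restrict P A2)) := by
  intro Γ A A1 A2 n P _ _ hp _
  obtain ⟨hU, hd, hA1, hA2, hcons⟩ := hp
  have hA1A : A1 ⊆ A := hU ▸ Finset.subset_union_left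
  have hA2A : A2 ⊆ A := hU ▸ Finset.subset_union_right
  ext J
  constructor
  · rintro ⟨hJmem, hJmax⟩
    have h1 : J ∩ A1 ∈ CCJ Γ A1 := inter_mem_CCJ hA1 hA1A hJmem
    have h2 : J ∩ A2 ∈ CCJ Γ A2 := inter_mem_CCJ hA2 hA2A hJmem
    have hJeq : J = (J ∩ A1) ∪ (J ∩ A2) := decomp_eq hU hJmem.1
    have hsum : medScore P J = medScore P (J ∩ A1) + medScore P (J ∩ A2) := by
      conv_lhs => rw [hJeq]
      exact score_add hd Finset.inter_subset_right Finset.inter_subset_right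
    refine ⟨J ∩ A1, ⟨h1, ?_⟩, J ∩ A2, ⟨h2, ?_⟩, hJeq⟩
    · intro J1' hJ1'
      rw [restrict_medScore P A1 _ hJ1'.1, restrict_medScore P A1 _ h1.1]
      have := hJmax _ (union_mem_CCJ ⟨hU, hd, hA1, hA2, hcons⟩ hJ1' h2)
      rw [score_add hd hJ1'.1 Finset.inter_subset_right, hsum] at this
      omega
    · intro J2' hJ2'
      rw [restrict_medScore P A2 _ hJ2'.1, restrict_medScore P A2 _ h2.1]
      have := hJmax _ (union_mem_CCJ ⟨hU, hd, hA1, hA2, hcons⟩ h1 hJ2')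
      rw [score_add hd Finset.inter_subset_right hJ2'.1, hsum] at this
      omega
  · rintro ⟨J1, ⟨h1, h1max⟩, J2, ⟨h2, h2max⟩, rfl⟩
    refine ⟨union_mem_CCJ ⟨hU, hd, hA1, hA2, hcons⟩ h1 h2, ?_⟩
    intro J' hJ'
    have hJ'eq : J' = (J' ∩ A1) ∪ (J' ∩ A2) := decomp_eq hU hJ'.1
    have b1 := h1max _ (inter_mem_CCJ hA1 hA1A hJ')
    have b2 := h2max _ (inter_mem_CCJ hA2 hA2A hJ')
    rw [restrict_medScore P A1 _ Finset.inter_subset_right,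
      restrict_medScore P A1 _ h1.1] at b1
    rw [restrict_medScore P A2 _ Finset.inter_subset_right,
      restrict_medScore P A2 _ h2.1] at b2
    rw [hJ'eq, score_add hd Finset.inter_subset_right Finset.inter_subset_right,
      score_add hd h1.1 h2.1]
    omega

end JA
end

section
/- The ranked agenda rule RA is agenda separable: for every constrained agenda (A,Γ), every independent partition {A1,A2} of A, and every profile P over A, RA(P) = { J1 ∪ J2 : J1 ∈ RA(P↓A1), J2 ∈ RA(P↓A2) }. -/
namespace JA

variable {V : Type*} [Fintype V] [DecidableEq V]

open Classical in
/-- The greedy procedure of the ranked agenda rule: go through the list of agenda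
formulas in order, adding a formula whenever it keeps the set `Γ`-consistent. -/
noncomputable def greedy (Γ : Finset V) :
    List (Finset V) → Finset (Finset V) → Finset (Finset V)
  | [], S => S
  | φ :: l, S =>
      if Consistent Γ (insert φ S) then greedy Γ l (insert φ S) else greedy Γ l S

/-- The ranked agenda rule `RA`: outputs all judgment sets obtained by running the greedy
procedure along some enumeration of `A` ordered by weakly decreasing majority support. -/
noncomputable def RA (Γ : Finset V) (A : Finset (Finset V)) {n : ℕ}
    (P : Fin n → Finset (Finset V)) : Set (Finset (Finset V)) :=
  {J | ∃ l : List (Finset V), l.Nodup ∧ l.toFinset = A ∧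
    l.Pairwise (fun φ ψ => Ncount P ψ ≤ Ncount P φ) ∧ J = greedy Γ l ∅}

end JA

/-!
Independence of `A1` and `A2` means that, for consistent `S1 ⊆ A1` and `S2 ⊆ A2`, a formula
of `A1` is consistent with `S1 ∪ S2` iff it is consistent with `S1` (and symmetrically), so the
greedy run along any enumeration of `A` is the union of the greedy runs along its restrictions
to `A1` and `A2`. Since `N(P↓Ai, φ) = N(P, φ)` on `Ai`, restricting an admissible enumeration
of `A` gives admissible enumerations of `A1` and `A2`; conversely, merging admissible
enumerations of `A1` and `A2` by support gives an admissible enumeration of `A` whose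
restrictions are the two given ones.
-/

namespace List

variable {α : Type*}

theorem filter_merge_of_forall_left (s : α → α → Bool) {p : α → Bool} {l r : List α}
    (hl : ∀ x ∈ l, p x) (hr : ∀ x ∈ r, ¬p x) : (merge l r s).filter p = l := by
  fun_induction merge l r s with
  | case1 r => exact filter_eq_nil_iff.2 hr
  | case2 l => exact filter_eq_self.2 hl
  | case3 | case4 => grind

theorem filter_merge_of_forall_right (s : α → α → Bool) {p : α → Bool} {l r : List α}
    (hl : ∀ x ∈ l, ¬p x) (hr : ∀ x ∈ r, p x) : (merge l r s).filter p = r := by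
  fun_induction merge l r s with
  | case1 r => exact filter_eq_self.2 hr
  | case2 l => exact filter_eq_nil_iff.2 hl
  | case3 | case4 => grind

theorem Pairwise.merge_ge_comp {β : Type*} [LinearOrder β] {f : α → β} {l r : List α}
    (hl : l.Pairwise (fun a b => f b ≤ f a)) (hr : r.Pairwise (fun a b => f b ≤ f a)) :
    (List.merge l r (fun a b => f b ≤ f a)).Pairwise (fun a b => f b ≤ f a) := by
  simpa using pairwise_merge (le := fun a b => f b ≤ f a)
    (fun _ _ _ hab hbc => by simp only [decide_eq_true_eq] at *; exact hbc.trans hab)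
    (fun a b => by simpa using le_total (f b) (f a)) l r (by simpa using hl) (by simpa using hr)

end List

namespace JA

open Finset

variable {V : Type*}

section Consistency

variable {Γ : Finset V} {S T A : Finset (Finset V)}

theorem Consistent.subset (h : Consistent Γ T) (hST : S ⊆ T) : Consistent Γ S := by
  obtain ⟨v, hv, hT⟩ := h
  exact ⟨v, hv, fun φ hφ => hT φ (hST hφ)⟩

theorem consistent_empty (hΓ : Γ.Nonempty) : Consistent Γ ∅ := by
  obtain ⟨v, hv⟩ := hΓ
  exact ⟨v, hv, by simp⟩

theorem Consistent.exists_ccj_superset [Fintype V] [DecidableEq V] (hA : ∀ φ ∈ A, φᶜ ∈ A)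
    (hSA : S ⊆ A) (h : Consistent Γ S) : ∃ J ∈ CCJ Γ A, S ⊆ J := by
  obtain ⟨v, hv, hS⟩ := h
  refine ⟨A.filter (v ∈ ·), ⟨filter_subset _ _, fun φ hφ => ?_, v, hv, by simp⟩, ?_⟩
  · by_cases hvφ : v ∈ φ
    · exact Or.inl (mem_filter.2 ⟨hφ, hvφ⟩)
    · exact Or.inr (mem_filter.2 ⟨hA φ hφ, mem_compl.2 hvφ⟩)
  · exact fun φ hφ => mem_filter.2 ⟨hSA hφ, hS φ hφ⟩

end Consistency

variable [DecidableEq V]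

def Independent (Γ : Finset V) (A1 A2 : Finset (Finset V)) : Prop :=
  ∀ S1 ⊆ A1, ∀ S2 ⊆ A2, Consistent Γ S1 → Consistent Γ S2 → Consistent Γ (S1 ∪ S2)

theorem Independent.symm {Γ : Finset V} {A1 A2 : Finset (Finset V)}
    (h : Independent Γ A1 A2) : Independent Γ A2 A1 := fun S2 hS2 S1 hS1 hc2 hc1 =>
  union_comm S1 S2 ▸ h S1 hS1 S2 hS2 hc1 hc2

theorem IndepPartition.independent [Fintype V] {Γ : Finset V} {A A1 A2 : Finset (Finset V)}
    (h : IndepPartition Γ A A1 A2) : Independent Γ A1 A2 := by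
  obtain ⟨-, -, hA1, hA2, hcons⟩ := h
  intro S1 hS1 S2 hS2 hc1 hc2
  obtain ⟨J1, hJ1, hSJ1⟩ := hc1.exists_ccj_superset hA1.1 hS1
  obtain ⟨J2, hJ2, hSJ2⟩ := hc2.exists_ccj_superset hA2.1 hS2
  exact (hcons J1 hJ1 J2 hJ2).subset (union_subset_union hSJ1 hSJ2)

open Classical in
noncomputable def greedyStep (Γ φ : Finset V) (S : Finset (Finset V)) : Finset (Finset V) :=
  if Consistent Γ (insert φ S) then insert φ S else S

section GreedyStep

variable {Γ φ : Finset V} {S A A1 A2 S1 S2 : Finset (Finset V)}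

theorem greedy_cons (l : List (Finset V)) :
    greedy Γ (φ :: l) S = greedy Γ l (greedyStep Γ φ S) := by
  simp only [greedy, greedyStep]
  split_ifs <;> rfl

theorem greedyStep_subset (hφ : φ ∈ A) (hS : S ⊆ A) : greedyStep Γ φ S ⊆ A := by
  unfold greedyStep
  split_ifs
  exacts [insert_subset hφ hS, hS]

theorem Consistent.greedyStep (h : Consistent Γ S) : Consistent Γ (greedyStep Γ φ S) := by
  unfold JA.greedyStep
  split_ifs with hφ
  exacts [hφ, h]

theorem Independent.greedyStep_union_left (h : Independent Γ A1 A2) (hφ : φ ∈ A1)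
    (hS1 : S1 ⊆ A1) (hS2 : S2 ⊆ A2) (hc2 : Consistent Γ S2) :
    greedyStep Γ φ (S1 ∪ S2) = greedyStep Γ φ S1 ∪ S2 := by
  have hiff : Consistent Γ (insert φ (S1 ∪ S2)) ↔ Consistent Γ (insert φ S1) := by
    rw [← insert_union]
    exact ⟨fun hc => hc.subset subset_union_left,
      fun hc => h _ (insert_subset hφ hS1) _ hS2 hc hc2⟩
  unfold greedyStep
  by_cases hc : Consistent Γ (insert φ S1)
  · rw [if_pos (hiff.2 hc), if_pos hc, insert_union]
  · rw [if_neg (mt hiff.1 hc), if_neg hc]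

theorem Independent.greedyStep_union_right (h : Independent Γ A1 A2) (hφ : φ ∈ A2)
    (hS1 : S1 ⊆ A1) (hS2 : S2 ⊆ A2) (hc1 : Consistent Γ S1) :
    greedyStep Γ φ (S1 ∪ S2) = S1 ∪ greedyStep Γ φ S2 := by
  rw [union_comm, h.symm.greedyStep_union_left hφ hS2 hS1 hc1, union_comm]

end GreedyStep

theorem Independent.greedy_union {Γ : Finset V} {A1 A2 : Finset (Finset V)}
    (h : Independent Γ A1 A2) (hd : Disjoint A1 A2) :
    ∀ {l : List (Finset V)} {S1 S2 : Finset (Finset V)}, (∀ φ ∈ l, φ ∈ A1 ∪ A2) →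
      S1 ⊆ A1 → S2 ⊆ A2 → Consistent Γ S1 → Consistent Γ S2 →
      greedy Γ l (S1 ∪ S2) =
        greedy Γ (l.filter (· ∈ A1)) S1 ∪ greedy Γ (l.filter (· ∈ A2)) S2
  | [], _, _, _, _, _, _, _ => rfl
  | φ :: l, S1, S2, hl, hS1, hS2, hc1, hc2 => by
    have hl' : ∀ ψ ∈ l, ψ ∈ A1 ∪ A2 := fun ψ hψ => hl ψ (List.mem_cons_of_mem φ hψ)
    rcases mem_union.1 (hl φ List.mem_cons_self) with hφ | hφ
    · have hφ2 : φ ∉ A2 := disjoint_left.1 hd hφ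
      rw [List.filter_cons_of_pos (by simpa), List.filter_cons_of_neg (by simpa), greedy_cons,
        greedy_cons, h.greedyStep_union_left hφ hS1 hS2 hc2]
      exact h.greedy_union hd hl' (greedyStep_subset hφ hS1) hS2 hc1.greedyStep hc2
    · have hφ1 : φ ∉ A1 := disjoint_right.1 hd hφ
      rw [List.filter_cons_of_neg (by simpa), List.filter_cons_of_pos (by simpa), greedy_cons,
        greedy_cons, h.greedyStep_union_right hφ hS1 hS2 hc1]
      exact h.greedy_union hd hl' hS1 (greedyStep_subset hφ hS2) hc1 hc2.greedyStep

theorem ncount_restrict {n : ℕ} (P : Fin n → Finset (Finset V)) {B : Finset (Finset V)}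
    {φ : Finset V} (hφ : φ ∈ B) : Ncount (restrict P B) φ = Ncount P φ := by
  simp [Ncount, restrict, hφ]

def IsRanking (A : Finset (Finset V)) {n : ℕ} (P : Fin n → Finset (Finset V))
    (l : List (Finset V)) : Prop :=
  l.Nodup ∧ l.toFinset = A ∧ l.Pairwise (fun φ ψ => Ncount P ψ ≤ Ncount P φ)

theorem mem_RA {Γ : Finset V} {A J : Finset (Finset V)} {n : ℕ}
    {P : Fin n → Finset (Finset V)} :
    J ∈ RA Γ A P ↔ ∃ l, IsRanking A P l ∧ J = greedy Γ l ∅ := by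
  simp only [RA, IsRanking, Set.mem_ofPred_eq, and_assoc]

section IsRanking

variable {A B A1 A2 : Finset (Finset V)} {n : ℕ} {P : Fin n → Finset (Finset V)}
  {l l1 l2 : List (Finset V)}

theorem IsRanking.mem (h : IsRanking A P l) : ∀ φ ∈ l, φ ∈ A :=
  fun _ hφ => h.2.1 ▸ List.mem_toFinset.2 hφ

theorem pairwise_ncount_restrict_iff (hl : ∀ φ ∈ l, φ ∈ B) :
    l.Pairwise (fun φ ψ => Ncount (restrict P B) ψ ≤ Ncount (restrict P B) φ) ↔
      l.Pairwise (fun φ ψ => Ncount P ψ ≤ Ncount P φ) :=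
  List.Pairwise.iff_of_mem fun hφ hψ => by
    rw [ncount_restrict P (hl _ hφ), ncount_restrict P (hl _ hψ)]

theorem IsRanking.filter (h : IsRanking A P l) (hBA : B ⊆ A) :
    IsRanking B (restrict P B) (l.filter (· ∈ B)) := by
  obtain ⟨hnd, hA, hs⟩ := h
  refine ⟨hnd.filter _, ?_, (pairwise_ncount_restrict_iff (by simp)).2 (hs.filter _)⟩
  simp only [List.toFinset_filter, decide_eq_true_eq, hA, filter_mem_eq_inter,
    inter_eq_right.2 hBA]

theorem IsRanking.merge (h1 : IsRanking A1 (restrict P A1) l1)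
    (h2 : IsRanking A2 (restrict P A2) l2) (hd : Disjoint A1 A2) :
    IsRanking (A1 ∪ A2) P (l1.merge l2 (fun φ ψ => Ncount P ψ ≤ Ncount P φ)) := by
  have hperm := List.merge_perm_append (fun φ ψ => decide (Ncount P ψ ≤ Ncount P φ))
    (xs := l1) (ys := l2)
  refine ⟨hperm.nodup_iff.2 (h1.1.append h2.1 fun φ hφ1 hφ2 =>
    disjoint_left.1 hd (h1.mem _ hφ1) (h2.mem _ hφ2)), ?_, ?_⟩
  · rw [List.toFinset_eq_of_perm _ _ hperm, List.toFinset_append, h1.2.1, h2.2.1]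
  · exact ((pairwise_ncount_restrict_iff h1.mem).1 h1.2.2).merge_ge_comp
      ((pairwise_ncount_restrict_iff h2.mem).1 h2.2.2)

end IsRanking

end JA

namespace JA

open Finset

theorem ra_agenda_separable_general {V : Type*} [Fintype V] [DecidableEq V] :
    ∀ (Γ : Finset V) (A A1 A2 : Finset (Finset V)) (n : ℕ) (P : Fin n → Finset (Finset V)),
      Γ.Nonempty → IsAgenda A → IndepPartition Γ A A1 A2 → IsProfile Γ A P →
      RA Γ A P = pairUnions (RA Γ A1 (restrict P A1)) (RA Γ A2 (restrict P A2)) := by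
  intro Γ A A1 A2 n P hΓ _ hpart _
  have hind := hpart.independent
  obtain ⟨rfl, hd, -⟩ := hpart
  have hsplit {l : List (Finset V)} (hl : IsRanking (A1 ∪ A2) P l) :
      greedy Γ l ∅ = greedy Γ (l.filter (· ∈ A1)) ∅ ∪ greedy Γ (l.filter (· ∈ A2)) ∅ := by
    have := hind.greedy_union hd hl.mem (empty_subset A1) (empty_subset A2)
      (consistent_empty hΓ) (consistent_empty hΓ)
    rwa [empty_union] at this
  ext J
  simp only [mem_RA, pairUnions, Set.mem_ofPred_eq]
  constructor
  · rintro ⟨l, hl, rfl⟩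
    exact ⟨_, ⟨_, hl.filter subset_union_left, rfl⟩, _, ⟨_, hl.filter subset_union_right, rfl⟩,
      hsplit hl⟩
  · rintro ⟨_, ⟨l1, hl1, rfl⟩, _, ⟨l2, hl2, rfl⟩, rfl⟩
    refine ⟨_, hl1.merge hl2 hd, ?_⟩
    rw [hsplit (hl1.merge hl2 hd),
      List.filter_merge_of_forall_left _ (by simpa using hl1.mem)
        (by simpa using fun _ hφ => disjoint_right.1 hd (hl2.mem _ hφ)),
      List.filter_merge_of_forall_right _
        (by simpa using fun _ hφ => disjoint_left.1 hd (hl1.mem _ hφ)) (by simpa using hl2.mem)]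

/-- The ranked agenda rule is agenda separable. -/
theorem ra_agenda_separable {V : Type*} [Fintype V] [DecidableEq V] [Nonempty V] :
    ∀ (Γ : Finset V) (A A1 A2 : Finset (Finset V)) (n : ℕ) (P : Fin n → Finset (Finset V)),
      Γ.Nonempty → IsAgenda A → IndepPartition Γ A A1 A2 → IsProfile Γ A P →
      RA Γ A P = pairUnions (RA Γ A1 (restrict P A1)) (RA Γ A2 (restrict P A2)) :=
  ra_agenda_separable_general

end JA
end
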